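/- arXiv:2003.01503 — 2 statements merged into one kernel-verified Lean document; each statement's English description precedes it below -/
import Mathlib

section
/- Let N = (S, C, R) be a chemical reaction network and let N_1, ..., N_k be the subnetworks of a decomposition which is independent or incidence independent, and suppose every subnetwork has deficiency zero, δ_i = 0 for all i. Then δ = 0 if and only if the decomposition is bi-independent. -/
open scoped Classical

noncomputable section

/-- A reaction: an ordered pair (reactant complex, product complex) of vectors in ℝ^S. -/
abbrev Rxn (S : Type*) := (S → ℝ) × (S → ℝ)

variable {S : Type*} [Fintype S]

/-- The set of complexes occurring in a reaction set. -/
def complexesOf (R : Finset (Rxn S)) : Finset (S → ℝ) :=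
  R.image Prod.fst ∪ R.image Prod.snd

/-- `(C, R)` is a chemical reaction network on the species set `S`:
complexes have nonnegative integer coordinates, reactions go between complexes,
no reaction is a loop, and every complex occurs in at least one reaction. -/
def IsCRN (C : Finset (S → ℝ)) (R : Finset (Rxn S)) : Prop :=
  C.Nonempty ∧ R.Nonempty ∧
  (∀ y ∈ C, ∀ s, ∃ n : ℕ, y s = (n : ℝ)) ∧
  (∀ r ∈ R, r.1 ∈ C ∧ r.2 ∈ C) ∧
  (∀ r ∈ R, r.1 ≠ r.2) ∧
  (∀ y ∈ C, ∃ r ∈ R, r.1 = y ∨ r.2 = y)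

/-- The stoichiometric subspace `span {y' - y : (y, y') ∈ R}`. -/
def stoichSubspace (R : Finset (Rxn S)) : Submodule ℝ (S → ℝ) :=
  Submodule.span ℝ ((fun r : Rxn S => r.2 - r.1) '' ↑R)

/-- The rank `s = dim S` of the network. -/
def crnRank (R : Finset (Rxn S)) : ℕ := Module.finrank ℝ (stoichSubspace R)

/-- The standard basis vector `ω_y` of the complex space `ℝ^C` (realized inside
the space of real-valued functions on complexes). -/
def omegaC (y : S → ℝ) : (S → ℝ) → ℝ := fun z => if z = y then 1 else 0

/-- The image of the incidence map `I_a`, i.e. the span of the vectors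
`ω_{y'} - ω_y` over reactions `y → y'`. -/
def incImage (R : Finset (Rxn S)) : Submodule ℝ ((S → ℝ) → ℝ) :=
  Submodule.span ℝ ((fun r : Rxn S => omegaC r.2 - omegaC r.1) '' ↑R)

/-- The underlying undirected graph of `(C, R)`, on the complexes occurring in `R`. -/
def linkGraph (R : Finset (Rxn S)) : SimpleGraph {y : S → ℝ // y ∈ complexesOf R} where
  Adj a b := a ≠ b ∧ ((a.1, b.1) ∈ R ∨ (b.1, a.1) ∈ R)
  symm := ⟨fun a b h => ⟨h.1.symm, h.2.symm⟩⟩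
  loopless := ⟨fun a h => h.1 rfl⟩

/-- `n`, the number of complexes. -/
def numComplexes (R : Finset (Rxn S)) : ℕ := (complexesOf R).card

/-- `l`, the number of linkage classes (connected components of the
underlying undirected graph). -/
def numLinkageClasses (R : Finset (Rxn S)) : ℕ :=
  Nat.card (linkGraph R).ConnectedComponent

/-- The deficiency `δ = n - l - s` (as an integer). -/
def deficiency (R : Finset (Rxn S)) : ℤ :=
  (numComplexes R : ℤ) - (numLinkageClasses R : ℤ) - (crnRank R : ℤ)

/-- A covering of the reaction set `R`: a family of subsets of `R` whose union is `R`. -/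
def IsCovering {ι : Type*} (R : Finset (Rxn S)) (f : ι → Finset (Rxn S)) : Prop :=
  (∀ i, f i ⊆ R) ∧ ∀ r ∈ R, ∃ i, r ∈ f i

/-- A decomposition of the reaction set `R`: a partition of `R` into nonempty subsets. -/
def IsDecomposition {ι : Type*} (R : Finset (Rxn S)) (f : ι → Finset (Rxn S)) : Prop :=
  (∀ i, (f i).Nonempty) ∧ (Pairwise fun i j => Disjoint (f i) (f j)) ∧
  (∀ i, f i ⊆ R) ∧ (∀ r ∈ R, ∃ i, r ∈ f i)

/-- Independence: the stoichiometric subspace is the direct sum of those of the subnetworks. -/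
def IsIndependent {ι : Type*} (R : Finset (Rxn S)) (f : ι → Finset (Rxn S)) : Prop :=
  (⨆ i, stoichSubspace (f i)) = stoichSubspace R ∧
  iSupIndep fun i => stoichSubspace (f i)

/-- Incidence independence: the image of the incidence map is the direct sum of the
images of the incidence maps of the subnetworks. -/
def IsIncidenceIndependent {ι : Type*} (R : Finset (Rxn S)) (f : ι → Finset (Rxn S)) : Prop :=
  (⨆ i, incImage (f i)) = incImage R ∧
  iSupIndep fun i => incImage (f i)

/-- A `𝒞`-decomposition: the complex sets of the subnetworks are pairwise disjoint. -/
def CDisjoint {ι : Type*} (f : ι → Finset (Rxn S)) : Prop :=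
  Pairwise fun i j => Disjoint (complexesOf (f i)) (complexesOf (f j))

/-- The set of nonzero complexes of a reaction set. -/
def nonzeroComplexesOf (R : Finset (Rxn S)) : Finset (S → ℝ) := (complexesOf R).erase 0

/-- A `𝒞*`-decomposition: the sets of nonzero complexes are pairwise disjoint. -/
def CstarDisjoint {ι : Type*} (f : ι → Finset (Rxn S)) : Prop :=
  Pairwise fun i j => Disjoint (nonzeroComplexesOf (f i)) (nonzeroComplexesOf (f j))

/-- A coarsening: each block of `f` is contained in exactly one block of `g`. -/
def IsCoarsening {ι κ : Type*} (f : ι → Finset (Rxn S)) (g : κ → Finset (Rxn S)) : Prop :=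
  ∀ i, ∃! j, f i ⊆ g j

/-- Undirected reachability in the graph `(C, R)`. -/
def undirReach (R : Finset (Rxn S)) : (S → ℝ) → (S → ℝ) → Prop :=
  Relation.ReflTransGen fun y z => (y, z) ∈ R ∨ (z, y) ∈ R

/-- Directed reachability in the digraph `(C, R)`. -/
def dirReach (R : Finset (Rxn S)) : (S → ℝ) → (S → ℝ) → Prop :=
  Relation.ReflTransGen fun y z => (y, z) ∈ R

/-- Weak reversibility: every connected component of the directed graph `(C, R)`
is strongly connected. -/
def WeaklyReversible (R : Finset (Rxn S)) : Prop :=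
  ∀ y z, undirReach R y z → dirReach R y z

/-- The set of complex balanced equilibria `Z₊(N, K)` of a kinetics `K` on the
(sub)network with reaction set `R`: positive vectors `x` with `I_a K(x) = 0`. -/
def Zplus (R : Finset (Rxn S)) (K : (S → ℝ) → Rxn S → ℝ) : Set (S → ℝ) :=
  {x | (∀ s, 0 < x s) ∧ ∑ r ∈ R, K x r • (omegaC r.2 - omegaC r.1) = 0}

/-- The reactions lying in the linkage class of the zero complex. -/
def zeroLinkReactions (R : Finset (Rxn S)) : Finset (Rxn S) :=
  R.filter fun r => undirReach R 0 r.1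

/-- The reaction set of the linkage class `c`: all reactions whose complexes lie in `c`. -/
def lcReactions (R : Finset (Rxn S)) (c : (linkGraph R).ConnectedComponent) :
    Finset (Rxn S) :=
  R.filter fun r => ∃ h : r.1 ∈ complexesOf R, (linkGraph R).connectedComponentMk ⟨r.1, h⟩ = c

/-- The network has independent linkage classes (ILC): the linkage class
decomposition is independent. -/
def HasILC (R : Finset (Rxn S)) : Prop := IsIndependent R (lcReactions R)


/-!
The kernel of the incidence matrix (rows `ω_{y'} - ω_y`, one per reaction) consists of the
functions constant on linkage classes, i.e. it is the kernel of the Laplacian of the linkage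
graph, so by rank–nullity `n - l = dim Im I_a` and `δ = dim Im I_a - s`. For a decomposition,
`Im I_a` and `S` are the sums of the corresponding subspaces of the subnetworks, hence
`dim Im I_a ≤ Σ dim Im I_{a,i}` and `s ≤ Σ s_i`, with equality exactly for incidence
independence and independence respectively. When every `δ_i = 0` the two right-hand sums
coincide, so once one equality holds, `δ = 0` is equivalent to the other.
-/

open Module

namespace Submodule

variable {K M ι : Type*} [Field K] [AddCommGroup M] [Module K M] [Fintype ι] [DecidableEq ι]
  (V : ι → Submodule K M) [∀ i, FiniteDimensional K (V i)]

theorem finrank_iSup_add_finrank_ker_dfinsuppLsum :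
    finrank K ↥(⨆ i, V i) + finrank K (LinearMap.ker (DFinsupp.lsum ℕ fun i => (V i).subtype)) =
      ∑ i, finrank K (V i) := by
  rw [iSup_eq_range_dfinsupp_lsum, LinearMap.finrank_range_add_finrank_ker]
  exact finrank_directSum K fun i => V i

theorem finrank_iSup_le_sum : finrank K ↥(⨆ i, V i) ≤ ∑ i, finrank K (V i) := by
  have := finrank_iSup_add_finrank_ker_dfinsuppLsum V
  omega

theorem iSupIndep_iff_finrank_iSup_eq_sum :
    iSupIndep V ↔ finrank K ↥(⨆ i, V i) = ∑ i, finrank K (V i) := by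
  rw [← finrank_iSup_add_finrank_ker_dfinsuppLsum V, left_eq_add, finrank_eq_zero,
    LinearMap.ker_eq_bot]
  exact ⟨iSupIndep.dfinsupp_lsum_injective, iSupIndep_of_dfinsupp_lsum_injective V⟩

end Submodule

theorem fst_mem_complexesOf {R : Finset (Rxn S)} {r : Rxn S} (hr : r ∈ R) :
    r.1 ∈ complexesOf R :=
  Finset.mem_union_left _ (Finset.mem_image_of_mem _ hr)

theorem snd_mem_complexesOf {R : Finset (Rxn S)} {r : Rxn S} (hr : r ∈ R) :
    r.2 ∈ complexesOf R :=
  Finset.mem_union_right _ (Finset.mem_image_of_mem _ hr)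

/-- The transpose of the matrix of `I_a`, with `ℝ^C` realized as functions on `complexesOf R`. -/
def incidenceMatrix (R : Finset (Rxn S)) : Matrix R (complexesOf R) ℝ := fun r =>
  Pi.single ⟨r.1.2, snd_mem_complexesOf r.2⟩ 1 - Pi.single ⟨r.1.1, fst_mem_complexesOf r.2⟩ 1

theorem incidenceMatrix_mulVec_apply (R : Finset (Rxn S)) (x : complexesOf R → ℝ) (r : R) :
    (incidenceMatrix R).mulVec x r =
      x ⟨r.1.2, snd_mem_complexesOf r.2⟩ - x ⟨r.1.1, fst_mem_complexesOf r.2⟩ := by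
  rw [Matrix.mulVec, incidenceMatrix, sub_dotProduct, single_one_dotProduct, single_one_dotProduct]

theorem ker_mulVecLin_incidenceMatrix (R : Finset (Rxn S)) :
    LinearMap.ker (incidenceMatrix R).mulVecLin =
      LinearMap.ker ((linkGraph R).lapMatrix ℝ).toLin' := by
  ext x
  simp only [LinearMap.mem_ker, Matrix.mulVecLin_apply, Matrix.toLin'_apply,
    SimpleGraph.lapMatrix_mulVec_eq_zero_iff_forall_adj]
  simp only [funext_iff, incidenceMatrix_mulVec_apply, Pi.zero_apply, sub_eq_zero]
  constructor
  · rintro h a b ⟨-, hab | hba⟩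
    · exact (h ⟨_, hab⟩).symm
    · exact h ⟨_, hba⟩
  · rintro h ⟨r, hr⟩
    by_cases hloop : r.1 = r.2
    · simp [hloop]
    · exact (h _ _ ⟨fun h => hloop (congrArg Subtype.val h), Or.inl hr⟩).symm

theorem extendByZero_single_eq_omegaC {R : Finset (Rxn S)} (v : complexesOf R) :
    Function.ExtendByZero.linearMap ℝ Subtype.val (Pi.single v 1) = omegaC v.1 := by
  ext z
  simp only [Function.ExtendByZero.linearMap_apply, omegaC]
  by_cases hz : z ∈ complexesOf R
  · rw [show z = (⟨z, hz⟩ : complexesOf R).1 from rfl, Subtype.val_injective.extend_apply]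
    simp [Pi.single_apply, Subtype.ext_iff]
  · have hv : z ≠ v.1 := fun h => hz (h ▸ v.2)
    rw [Function.extend_apply' _ _ _ fun ⟨a, ha⟩ => hz (ha ▸ a.2), if_neg hv]
    rfl

theorem incImage_eq_map_span_incidenceMatrix (R : Finset (Rxn S)) :
    incImage R = (Submodule.span ℝ (Set.range (incidenceMatrix R).row)).map
      (Function.ExtendByZero.linearMap ℝ Subtype.val) := by
  rw [Submodule.map_span, incImage, ← Set.range_comp, Set.image_eq_range]
  congr 2
  ext r : 1
  change _ = Function.ExtendByZero.linearMap ℝ Subtype.val (incidenceMatrix R r)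
  rw [incidenceMatrix, map_sub, extendByZero_single_eq_omegaC, extendByZero_single_eq_omegaC]

theorem finrank_incImage_eq_rank (R : Finset (Rxn S)) :
    finrank ℝ (incImage R) = (incidenceMatrix R).rank := by
  rw [Matrix.rank_eq_finrank_span_row, incImage_eq_map_span_incidenceMatrix]
  exact (Submodule.equivMapOfInjective _
    (Function.extend_injective Subtype.val_injective (0 : (S → ℝ) → ℝ)) _).finrank_eq.symm

theorem finrank_incImage_add_numLinkageClasses (R : Finset (Rxn S)) :
    finrank ℝ (incImage R) + numLinkageClasses R = numComplexes R := by
  rw [finrank_incImage_eq_rank, numLinkageClasses, Nat.card_eq_fintype_card,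
    SimpleGraph.card_connectedComponent_eq_finrank_ker_toLin'_lapMatrix, ← ker_mulVecLin_incidenceMatrix,
    Matrix.rank, LinearMap.finrank_range_add_finrank_ker, finrank_pi, numComplexes, Fintype.card_coe]

theorem deficiency_eq_finrank_incImage_sub_crnRank (R : Finset (Rxn S)) :
    deficiency R = (finrank ℝ (incImage R) : ℤ) - crnRank R := by
  have := finrank_incImage_add_numLinkageClasses R
  rw [deficiency]
  omega

section Covering

variable {ι : Type*} {R : Finset (Rxn S)} {f : ι → Finset (Rxn S)}

section Stoichiometric

omit [Fintype S]

theorem IsDecomposition.isCovering (h : IsDecomposition R f) : IsCovering R f :=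
  h.2.2

theorem iSup_span_image_eq_of_isCovering {M : Type*} [AddCommMonoid M] [Module ℝ M]
    (hf : IsCovering R f) (g : Rxn S → M) :
    ⨆ i, Submodule.span ℝ (g '' f i) = Submodule.span ℝ (g '' R) := by
  rw [← Submodule.span_iUnion, ← Set.image_iUnion]
  congr 2
  ext r
  simp only [Set.mem_iUnion, Finset.mem_coe]
  exact ⟨fun ⟨i, hi⟩ => hf.1 i hi, hf.2 r⟩

instance (R : Finset (Rxn S)) : FiniteDimensional ℝ (stoichSubspace R) :=
  FiniteDimensional.span_of_finite ℝ (R.finite_toSet.image _)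

theorem iSup_stoichSubspace_of_isCovering (hf : IsCovering R f) :
    ⨆ i, stoichSubspace (f i) = stoichSubspace R :=
  iSup_span_image_eq_of_isCovering hf _

theorem crnRank_le_sum [Fintype ι] (hf : IsCovering R f) : crnRank R ≤ ∑ i, crnRank (f i) := by
  rw [crnRank, ← iSup_stoichSubspace_of_isCovering hf]
  exact Submodule.finrank_iSup_le_sum _

theorem isIndependent_iff_crnRank_eq_sum [Fintype ι] (hf : IsCovering R f) :
    IsIndependent R f ↔ crnRank R = ∑ i, crnRank (f i) := by
  rw [IsIndependent, Submodule.iSupIndep_iff_finrank_iSup_eq_sum,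
    iSup_stoichSubspace_of_isCovering hf, and_iff_right rfl, crnRank]
  rfl

end Stoichiometric

instance (R : Finset (Rxn S)) : FiniteDimensional ℝ (incImage R) :=
  FiniteDimensional.span_of_finite ℝ (R.finite_toSet.image _)

theorem iSup_incImage_of_isCovering (hf : IsCovering R f) :
    ⨆ i, incImage (f i) = incImage R :=
  iSup_span_image_eq_of_isCovering hf _

theorem finrank_incImage_le_sum [Fintype ι] (hf : IsCovering R f) :
    finrank ℝ (incImage R) ≤ ∑ i, finrank ℝ (incImage (f i)) := by
  rw [← iSup_incImage_of_isCovering hf]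
  exact Submodule.finrank_iSup_le_sum _

theorem isIncidenceIndependent_iff_finrank_eq_sum [Fintype ι] (hf : IsCovering R f) :
    IsIncidenceIndependent R f ↔ finrank ℝ (incImage R) = ∑ i, finrank ℝ (incImage (f i)) := by
  rw [IsIncidenceIndependent, Submodule.iSupIndep_iff_finrank_iSup_eq_sum,
    iSup_incImage_of_isCovering hf, and_iff_right rfl]

end Covering

theorem stmt_6_general (R : Finset (Rxn S)) {k : ℕ}
    (f : Fin k → Finset (Rxn S)) (hdec : IsDecomposition R f)
    (hii : IsIndependent R f ∨ IsIncidenceIndependent R f)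
    (hzero : ∀ i, deficiency (f i) = 0) :
    deficiency R = 0 ↔ (IsIndependent R f ∧ IsIncidenceIndependent R f) := by
  have hcov := hdec.isCovering
  have hsum : ∑ i, finrank ℝ (incImage (f i)) = ∑ i, crnRank (f i) :=
    Finset.sum_congr rfl fun i _ => by
      have := hzero i
      rw [deficiency_eq_finrank_incImage_sub_crnRank] at this
      omega
  have hs := crnRank_le_sum hcov
  have ha := finrank_incImage_le_sum hcov
  rw [isIndependent_iff_crnRank_eq_sum hcov, isIncidenceIndependent_iff_finrank_eq_sum hcov]
    at hii ⊢
  rw [deficiency_eq_finrank_incImage_sub_crnRank]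
  omega

/-- if all subnetworks of an independent or incidence independent
decomposition have deficiency zero, then δ = 0 iff the decomposition is bi-independent. -/
theorem stmt_6 (C : Finset (S → ℝ)) (R : Finset (Rxn S)) {k : ℕ}
    (f : Fin k → Finset (Rxn S)) (hcrn : IsCRN C R) (hdec : IsDecomposition R f)
    (hii : IsIndependent R f ∨ IsIncidenceIndependent R f)
    (hzero : ∀ i, deficiency (f i) = 0) :
    deficiency R = 0 ↔ (IsIndependent R f ∧ IsIncidenceIndependent R f) :=
  stmt_6_general R f hdec hii hzero

end
end

section
/- (Structure Theorem for C*-decompositions) Let N = N_1 ∪ N_2 ∪ ... ∪ N_k be a C*-decomposition of a chemical reaction network N whose complex set contains the zero complex, let L_0 be the linkage class of N containing the zero complex, and for each i let L_{0,i} be the linkage class of N_i containing the zero complex (taken to be empty if N_i does not contain the zero complex). Then: (i) the nonempty L_{0,i} form a C*-decomposition of the subnetwork L_0; and (ii) the nonempty subnetworks N_i \ L_{0,i} form a C-decomposition of N \ L_0. -/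
open scoped Classical

noncomputable section

variable {S : Type*} [Fintype S]

/-!
In a C*-decomposition two subnetworks share at most the zero complex. Take a path from `0` to a
complex `y` of `N_i` in `N`: if `y ≠ 0`, the last reaction of the path lies in the subnetwork whose
nonzero complexes contain `y`, which is `N_i`; by induction the whole path lies in `N_i`. Hence a
reaction of `N_i` belongs to `L_{0,i}` exactly when it belongs to `L_0`, so `L_{0,i} = N_i ∩ L_0`
and `N_i \ L_{0,i} = N_i \ L_0`, and the blocks of the decomposition restricted to `L_0` and to its
complement give the two decompositions. The zero complex never occurs in `N_i \ L_{0,i}`, so there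
C*-disjointness becomes C-disjointness.
-/

section

variable {ι κ : Type*}

lemma mem_complexesOf_fst {R : Finset (Rxn S)} {r : Rxn S} (h : r ∈ R) :
    r.1 ∈ complexesOf R :=
  Finset.mem_union_left _ (Finset.mem_image_of_mem _ h)

lemma mem_complexesOf_snd {R : Finset (Rxn S)} {r : Rxn S} (h : r ∈ R) :
    r.2 ∈ complexesOf R :=
  Finset.mem_union_right _ (Finset.mem_image_of_mem _ h)

lemma complexesOf_mono {A B : Finset (Rxn S)} (h : A ⊆ B) : complexesOf A ⊆ complexesOf B :=
  Finset.union_subset_union (Finset.image_subset_image h) (Finset.image_subset_image h)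

lemma nonzeroComplexesOf_mono {A B : Finset (Rxn S)} (h : A ⊆ B) :
    nonzeroComplexesOf A ⊆ nonzeroComplexesOf B :=
  Finset.erase_subset_erase _ (complexesOf_mono h)

omit [Fintype S] in
lemma undirReach_mono {A B : Finset (Rxn S)} (h : A ⊆ B) {x y : S → ℝ}
    (hxy : undirReach A x y) : undirReach B x y :=
  Relation.ReflTransGen.mono (fun _ _ hab => Or.imp (@h _) (@h _) hab) _ _ hxy

lemma zero_notMem_complexesOf_sdiff_zeroLinkReactions (R : Finset (Rxn S)) :
    (0 : S → ℝ) ∉ complexesOf (R \ zeroLinkReactions R) := by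
  intro h0
  have hreach : ∀ r ∈ R, r.1 = 0 ∨ r.2 = 0 → r ∈ zeroLinkReactions R := by
    rintro r hr (h1 | h2)
    · exact Finset.mem_filter.2 ⟨hr, h1 ▸ .refl⟩
    · exact Finset.mem_filter.2 ⟨hr, h2 ▸ .single (.inr hr)⟩
  rcases Finset.mem_union.1 h0 with h | h <;>
  · obtain ⟨r, hr, hr0⟩ := Finset.mem_image.1 h
    exact (Finset.mem_sdiff.1 hr).2 (hreach r (Finset.mem_sdiff.1 hr).1 (by simp [hr0]))

lemma complexesOf_sdiff_zeroLinkReactions_subset (R : Finset (Rxn S)) :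
    complexesOf (R \ zeroLinkReactions R) ⊆ nonzeroComplexesOf R := fun _ hy =>
  Finset.mem_erase.2 ⟨fun h => zero_notMem_complexesOf_sdiff_zeroLinkReactions R (h ▸ hy),
    complexesOf_mono Finset.sdiff_subset hy⟩

omit [Fintype S] in
lemma IsDecomposition.filter {R : Finset (Rxn S)} {f g : ι → Finset (Rxn S)}
    (hf : IsDecomposition R f) (p : Rxn S → Prop) [DecidablePred p]
    (hg : ∀ i, g i = (f i).filter p) :
    IsDecomposition (R.filter p) (fun i : {i // (g i).Nonempty} => g i.1) := by
  obtain ⟨-, hdisj, hsub, hcov⟩ := hf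
  refine ⟨fun i => i.2, fun i j hij => ?_, fun i => ?_, fun r hr => ?_⟩
  · simp only [hg]
    exact (hdisj fun h => hij (Subtype.ext h)).mono (Finset.filter_subset _ _)
      (Finset.filter_subset _ _)
  · simp only [hg]
    exact Finset.filter_subset_filter p (hsub i)
  · obtain ⟨hrR, hpr⟩ := Finset.mem_filter.1 hr
    obtain ⟨i, hi⟩ := hcov r hrR
    have hri : r ∈ g i := hg i ▸ Finset.mem_filter.2 ⟨hi, hpr⟩
    exact ⟨⟨i, r, hri⟩, hri⟩

lemma CstarDisjoint.eq_of_mem {f : ι → Finset (Rxn S)} (hf : CstarDisjoint f) {i j : ι}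
    {y : S → ℝ} (hi : y ∈ nonzeroComplexesOf (f i)) (hj : y ∈ nonzeroComplexesOf (f j)) :
    i = j := by
  by_contra hij
  exact Finset.disjoint_left.1 (hf hij) hi hj

lemma CstarDisjoint.of_subset {f : ι → Finset (Rxn S)} {g : κ → Finset (Rxn S)}
    (hf : CstarDisjoint f) {e : κ → ι} (he : Function.Injective e) (hg : ∀ j, g j ⊆ f (e j)) :
    CstarDisjoint g := fun _ _ hij =>
  (hf (he.ne hij)).mono (nonzeroComplexesOf_mono (hg _)) (nonzeroComplexesOf_mono (hg _))

lemma CstarDisjoint.cDisjoint_of_subset {f : ι → Finset (Rxn S)} {g : κ → Finset (Rxn S)}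
    (hf : CstarDisjoint f) {e : κ → ι} (he : Function.Injective e)
    (hg : ∀ j, complexesOf (g j) ⊆ nonzeroComplexesOf (f (e j))) : CDisjoint g := fun _ _ hij =>
  (hf (he.ne hij)).mono (hg _) (hg _)

lemma CstarDisjoint.undirReach_zero {R : Finset (Rxn S)} {f : ι → Finset (Rxn S)}
    (hstar : CstarDisjoint f) (hcov : ∀ r ∈ R, ∃ i, r ∈ f i) {y : S → ℝ}
    (hy : undirReach R 0 y) {i : ι} (hyi : y ∈ complexesOf (f i)) : undirReach (f i) 0 y := by
  induction hy generalizing i with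
  | refl => exact .refl
  | @tail b c _ hbc ih =>
    by_cases hc0 : c = 0
    · exact hc0 ▸ .refl
    obtain ⟨j, hj⟩ : ∃ j, (b, c) ∈ f j ∨ (c, b) ∈ f j := by
      rcases hbc with h | h
      · exact (hcov _ h).imp fun _ => .inl
      · exact (hcov _ h).imp fun _ => .inr
    have hbj : b ∈ complexesOf (f j) := hj.elim mem_complexesOf_fst mem_complexesOf_snd
    have hcj : c ∈ complexesOf (f j) := hj.elim mem_complexesOf_snd mem_complexesOf_fst
    obtain rfl : i = j :=
      hstar.eq_of_mem (Finset.mem_erase.2 ⟨hc0, hyi⟩) (Finset.mem_erase.2 ⟨hc0, hcj⟩)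
    exact (ih hbj).tail hj

lemma CstarDisjoint.zeroLinkReactions_eq_filter {R : Finset (Rxn S)} {f : ι → Finset (Rxn S)}
    (hstar : CstarDisjoint f) (hcov : IsCovering R f) (i : ι) :
    zeroLinkReactions (f i) = (f i).filter fun r => undirReach R 0 r.1 :=
  Finset.filter_congr fun _ hr =>
    ⟨undirReach_mono (hcov.1 i), fun h => hstar.undirReach_zero hcov.2 h (mem_complexesOf_fst hr)⟩

end

theorem stmt_15_general (R : Finset (Rxn S)) {k : ℕ}
    (f : Fin k → Finset (Rxn S))
    (hdec : IsDecomposition R f) (hstar : CstarDisjoint f) :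
    (IsDecomposition (zeroLinkReactions R)
        (fun i : {i : Fin k // (zeroLinkReactions (f i)).Nonempty} =>
          zeroLinkReactions (f i.1)) ∧
      CstarDisjoint
        (fun i : {i : Fin k // (zeroLinkReactions (f i)).Nonempty} =>
          zeroLinkReactions (f i.1))) ∧
    (IsDecomposition (R \ zeroLinkReactions R)
        (fun i : {i : Fin k // (f i \ zeroLinkReactions (f i)).Nonempty} =>
          f i.1 \ zeroLinkReactions (f i.1)) ∧
      CDisjoint
        (fun i : {i : Fin k // (f i \ zeroLinkReactions (f i)).Nonempty} =>
          f i.1 \ zeroLinkReactions (f i.1))) := by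
  have hL0 := hstar.zeroLinkReactions_eq_filter hdec.2.2
  have hcompl : ∀ i, f i \ zeroLinkReactions (f i) =
      (f i).filter fun r => ¬undirReach R 0 r.1 := fun i => by
    rw [Finset.filter_not, ← hL0]
  refine ⟨⟨hdec.filter _ hL0,
      hstar.of_subset Subtype.val_injective fun _ => Finset.filter_subset _ _⟩,
    ⟨?_, hstar.cDisjoint_of_subset Subtype.val_injective fun _ =>
      complexesOf_sdiff_zeroLinkReactions_subset _⟩⟩
  rw [zeroLinkReactions, ← Finset.filter_not]
  exact hdec.filter _ hcompl

/-- Structure Theorem for C*-decompositions: (i) the nonempty linkage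
classes L_{0,i} of the zero complex in the subnetworks form a C*-decomposition of L_0;
(ii) the nonempty subnetworks N_i \ L_{0,i} form a C-decomposition of N \ L_0. -/
theorem stmt_15 (C : Finset (S → ℝ)) (R : Finset (Rxn S)) {k : ℕ}
    (f : Fin k → Finset (Rxn S)) (hcrn : IsCRN C R) (h0 : (0 : S → ℝ) ∈ C)
    (hdec : IsDecomposition R f) (hstar : CstarDisjoint f) :
    (IsDecomposition (zeroLinkReactions R)
        (fun i : {i : Fin k // (zeroLinkReactions (f i)).Nonempty} =>
          zeroLinkReactions (f i.1)) ∧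
      CstarDisjoint
        (fun i : {i : Fin k // (zeroLinkReactions (f i)).Nonempty} =>
          zeroLinkReactions (f i.1))) ∧
    (IsDecomposition (R \ zeroLinkReactions R)
        (fun i : {i : Fin k // (f i \ zeroLinkReactions (f i)).Nonempty} =>
          f i.1 \ zeroLinkReactions (f i.1)) ∧
      CDisjoint
        (fun i : {i : Fin k // (f i \ zeroLinkReactions (f i)).Nonempty} =>
          f i.1 \ zeroLinkReactions (f i.1))) :=
  stmt_15_general R f hdec hstar

end
end
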